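/- arXiv:2602.18175 — 4 statements merged into one kernel-verified Lean document; each statement's English description precedes it below -/
import Mathlib

section
/- For p, q > 1 with 1/p + 1/q = 1, the convex (Legendre–Fenchel) conjugate of φ_p equals φ_q, i.e., for every y ∈ ℝ, sup_{x ∈ ℝ} (x·y − φ_p(x)) = φ_q(y). -/
/-!
The Fenchel–Young inequality `x * y ≤ φ_p x + φ_q y` reduces to `x, y ≥ 0`. It is Young's
inequality when `x, y > 1` and AM–GM when `x, y ≤ 1`; in the mixed case `x ≤ 1 < y` it follows
from `x * y - x ^ 2 / 2 ≤ y - 1 / 2`, and `y - 1 / 2 ≤ φ_q y` is Bernoulli's inequality.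
Equality holds at `x = y` when `|y| ≤ 1`, and at `x = sign y * |y| ^ (q - 1)` otherwise, which is
the equality case of Young's inequality.
-/

noncomputable def phiN (p : ℝ) (x : ℝ) : ℝ :=
  if |x| ≤ 1 then x ^ 2 / 2 else |x| ^ p / p - 1 / p + 1 / 2

open Real

lemma phiN_of_abs_le_one (p : ℝ) {x : ℝ} (hx : |x| ≤ 1) : phiN p x = x ^ 2 / 2 :=
  if_pos hx

lemma phiN_of_one_lt_abs (p : ℝ) {x : ℝ} (hx : 1 < |x|) :
    phiN p x = |x| ^ p / p - 1 / p + 1 / 2 :=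
  if_neg hx.not_ge

lemma phiN_abs (p x : ℝ) : phiN p |x| = phiN p x := by
  simp only [phiN, abs_abs, sq_abs]

lemma phiN_neg (p x : ℝ) : phiN p (-x) = phiN p x := by
  rw [← phiN_abs, abs_neg, phiN_abs]

lemma abs_sub_half_le_phiN {q : ℝ} (hq : 1 ≤ q) (x : ℝ) : |x| - 1 / 2 ≤ phiN q x := by
  rcases le_or_gt |x| 1 with hx | hx
  · rw [phiN_of_abs_le_one q hx]
    nlinarith [sq_abs x, sq_nonneg (|x| - 1)]
  · rw [phiN_of_one_lt_abs q hx]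
    have hq₀ : 0 < q := by linarith
    have bernoulli : 1 + q * (|x| - 1) ≤ |x| ^ q := by
      simpa using one_add_mul_self_le_rpow_one_add (s := |x| - 1) (by linarith) hq
    have bernoulli_div : (1 + q * (|x| - 1)) / q ≤ |x| ^ q / q := by gcongr
    have hdiv : (1 + q * (|x| - 1)) / q = 1 / q + |x| - 1 := by field_simp; ring
    linarith

lemma mul_le_sq_half_add_phiN {a b q : ℝ} (ha : a ≤ 1) (hb : 1 ≤ b) (hq : 1 ≤ q) :
    a * b ≤ a ^ 2 / 2 + phiN q b := by
  have hphi := abs_sub_half_le_phiN hq b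
  rw [abs_of_nonneg (by linarith)] at hphi
  nlinarith [mul_nonneg (sub_nonneg.2 ha) (by linarith : (0 : ℝ) ≤ 2 * b - 1 - a)]

lemma mul_le_phiN_add_phiN_of_nonneg {p q a b : ℝ} (hpq : p.HolderConjugate q) (ha : 0 ≤ a)
    (hb : 0 ≤ b) : a * b ≤ phiN p a + phiN q b := by
  rcases le_or_gt a 1 with ha₁ | ha₁ <;> rcases le_or_gt b 1 with hb₁ | hb₁
  · rw [phiN_of_abs_le_one p (by rwa [abs_of_nonneg ha]),
      phiN_of_abs_le_one q (by rwa [abs_of_nonneg hb])]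
    nlinarith [sq_nonneg (a - b)]
  · rw [phiN_of_abs_le_one p (by rwa [abs_of_nonneg ha])]
    exact mul_le_sq_half_add_phiN ha₁ hb₁.le hpq.symm.lt.le
  · rw [phiN_of_abs_le_one q (by rwa [abs_of_nonneg hb]), mul_comm, add_comm]
    exact mul_le_sq_half_add_phiN hb₁ ha₁.le hpq.lt.le
  · rw [phiN_of_one_lt_abs p (by rwa [abs_of_nonneg ha]),
      phiN_of_one_lt_abs q (by rwa [abs_of_nonneg hb]), abs_of_nonneg ha, abs_of_nonneg hb]
    have young := young_inequality_of_nonneg ha hb hpq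
    have hinv := hpq.inv_add_inv_eq_one
    simp only [one_div] at *
    linarith

lemma mul_le_phiN_add_phiN {p q : ℝ} (hpq : p.HolderConjugate q) (x y : ℝ) :
    x * y ≤ phiN p x + phiN q y :=
  calc x * y ≤ |x| * |y| := (le_abs_self _).trans (abs_mul x y).le
    _ ≤ phiN p |x| + phiN q |y| :=
      mul_le_phiN_add_phiN_of_nonneg hpq (abs_nonneg x) (abs_nonneg y)
    _ = phiN p x + phiN q y := by rw [phiN_abs, phiN_abs]

lemma exists_mul_sub_phiN_eq_of_nonneg {p q y : ℝ} (hpq : p.HolderConjugate q) (hy : 0 ≤ y) :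
    ∃ x, x * y - phiN p x = phiN q y := by
  rcases le_or_gt y 1 with hy₁ | hy₁
  · refine ⟨y, ?_⟩
    rw [phiN_of_abs_le_one p (by rwa [abs_of_nonneg hy]),
      phiN_of_abs_le_one q (by rwa [abs_of_nonneg hy])]
    ring
  · have hx : 1 < y ^ (q - 1) := one_lt_rpow hy₁ hpq.symm.sub_one_pos
    have hpow : (y ^ (q - 1)) ^ p = y ^ q := by
      rw [← rpow_mul hy, hpq.symm.sub_one_mul_conj]
    have young_eq : y ^ (q - 1) * y = (y ^ (q - 1)) ^ p / p + y ^ q / q :=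
      (young_inequality_eq_iff_of_nonneg (by positivity) hy hpq).2 hpow
    refine ⟨y ^ (q - 1), ?_⟩
    rw [phiN_of_one_lt_abs p (by rwa [abs_of_pos (by positivity)]),
      phiN_of_one_lt_abs q (by rwa [abs_of_nonneg hy]), abs_of_pos (by positivity),
      abs_of_nonneg hy]
    have hinv := hpq.inv_add_inv_eq_one
    simp only [one_div] at *
    linarith

lemma exists_mul_sub_phiN_eq {p q : ℝ} (hpq : p.HolderConjugate q) (y : ℝ) :
    ∃ x, x * y - phiN p x = phiN q y := by
  obtain ⟨x, hx⟩ := exists_mul_sub_phiN_eq_of_nonneg hpq (abs_nonneg y)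
  rcases abs_choice y with h | h <;> rw [h] at hx
  · exact ⟨x, hx⟩
  · exact ⟨-x, by rw [phiN_neg, ← phiN_neg q y, ← hx]; ring⟩

theorem convex_conjugate_phiN_general (p q : ℝ) (hp : 1 < p)
    (hpq : 1 / p + 1 / q = 1) (y : ℝ) :
    (⨆ x : ℝ, ((x * y - phiN p x : ℝ) : EReal)) = ((phiN q y : ℝ) : EReal) := by
  have hpq' : p.HolderConjugate q :=
    holderConjugate_iff.2 ⟨hp, by simpa only [one_div] using hpq⟩
  obtain ⟨x₀, hx₀⟩ := exists_mul_sub_phiN_eq hpq' y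
  refine le_antisymm (iSup_le fun x ↦ EReal.coe_le_coe_iff.2 ?_) ?_
  · linarith [mul_le_phiN_add_phiN hpq' x y]
  · rw [← hx₀]
    exact le_iSup (fun x : ℝ ↦ ((x * y - phiN p x : ℝ) : EReal)) x₀

theorem convex_conjugate_phiN (p q : ℝ) (hp : 1 < p) (hq : 1 < q)
    (hpq : 1 / p + 1 / q = 1) (y : ℝ) :
    (⨆ x : ℝ, ((x * y - phiN p x : ℝ) : EReal)) = ((phiN q y : ℝ) : EReal) :=
  convex_conjugate_phiN_general p q hp hpq y
end

section
/- One-sided tail bound via convex conjugate: if ξ satisfies Ê[e^{λ(ξ − m̄)}] ≤ e^{φ(aλ)} for all λ > 0, where φ is a quadratic N-function and a > 0, then for every ε > 0, V̂(ξ − m̄ > ε) ≤ exp(−φ*(ε/a)), where φ* is the convex conjugate of φ. -/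
/-!
Chernoff: for `λ > 0`, `1{ξ - m̄ > ε} ≤ e^{-λε} e^{λ(ξ - m̄)}` pointwise, so monotonicity and
positive homogeneity of `Ê` give `V̂(ξ - m̄ > ε) ≤ exp(-(x ε/a - φ x))` with `x = aλ > 0`.
Taking the infimum over `x > 0` yields `exp(-φ*(ε/a))`: the points `x < 0` of the supremum
defining `φ*` are dominated by `-x` because `φ` is even and `ε/a > 0`, and `x = 0` is a limit
of positive points because a convex function on `ℝ` is continuous.
-/

open Real Set

section Chernoff

variable {Ω : Type*} (E : (Ω → ℝ) → ℝ)

lemma indicator_lt_le_exp_mul (X : Ω → ℝ) {ε lam : ℝ} (hlam : 0 ≤ lam) (ω : Ω) :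
    {ω | ε < X ω}.indicator (fun _ => (1 : ℝ)) ω ≤ exp (-(lam * ε)) * exp (lam * X ω) := by
  rw [← exp_add]
  by_cases hω : ω ∈ {ω | ε < X ω}
  · rw [indicator_of_mem hω, ← exp_zero]
    exact exp_le_exp.mpr (by nlinarith [show ε < X ω from hω])
  · rw [indicator_of_notMem hω]
    positivity

lemma chernoff_bound
    (hmono : ∀ X Y : Ω → ℝ, (∀ ω, X ω ≤ Y ω) → E X ≤ E Y)
    (hhomog : ∀ (l : ℝ), 0 ≤ l → ∀ X : Ω → ℝ, E (fun ω => l * X ω) = l * E X)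
    (X : Ω → ℝ) {ε lam : ℝ} (hlam : 0 ≤ lam) :
    E ({ω | ε < X ω}.indicator fun _ => 1) ≤ exp (-(lam * ε)) * E (fun ω => exp (lam * X ω)) :=
  (hmono _ _ (indicator_lt_le_exp_mul X hlam)).trans_eq (hhomog _ (exp_nonneg _) _)

end Chernoff

section Conjugate

variable {φ : ℝ → ℝ} {y c s : ℝ}

lemma conjugate_le_of_forall_pos (heven : ∀ x, φ (-x) = φ x) (hφ : Continuous φ) (hy : 0 ≤ y)
    (hs : IsLUB {z : ℝ | ∃ x : ℝ, z = x * y - φ x} s) (h : ∀ x, 0 < x → x * y - φ x ≤ c) :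
    s ≤ c := by
  have hnonneg : ∀ x, 0 ≤ x → x * y - φ x ≤ c := by
    intro x hx
    have hcont : Continuous fun x => x * y - φ x := by fun_prop
    exact hcont.continuousWithinAt.closure_le (s := Ioi 0) (by simpa using hx)
      continuousWithinAt_const h
  refine hs.2 ?_
  rintro _ ⟨x, rfl⟩
  rcases le_total 0 x with hx | hx
  · exact hnonneg x hx
  · calc x * y - φ x ≤ -x * y - φ (-x) := by rw [heven]; nlinarith
      _ ≤ c := hnonneg (-x) (neg_nonneg.mpr hx)

lemma le_exp_neg_conjugate {v : ℝ} (heven : ∀ x, φ (-x) = φ x) (hφ : Continuous φ) (hy : 0 ≤ y)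
    (hs : IsLUB {z : ℝ | ∃ x : ℝ, z = x * y - φ x} s)
    (h : ∀ x, 0 < x → v ≤ exp (-(x * y - φ x))) : v ≤ exp (-s) := by
  rcases le_or_gt v 0 with hv | hv
  · exact hv.trans (exp_pos _).le
  · have : s ≤ -log v := conjugate_le_of_forall_pos heven hφ hy hs fun x hx => by
      have := log_le_log hv (h x hx)
      rw [log_exp] at this
      linarith
    calc v = exp (log v) := (exp_log hv).symm
      _ ≤ exp (-s) := exp_le_exp.mpr (by linarith)

end Conjugate

theorem tail_bound_conjugate_general {Ω : Type*}
    (E : (Ω → ℝ) → ℝ)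
    (hmono : ∀ X Y : Ω → ℝ, (∀ ω, X ω ≤ Y ω) → E X ≤ E Y)
    (hhomog : ∀ (l : ℝ), 0 ≤ l → ∀ X : Ω → ℝ, E (fun ω => l * X ω) = l * E X)
    (V : Set Ω → ℝ)
    (hV : ∀ A : Set Ω, V A = E (A.indicator fun _ => (1 : ℝ)))
    (φ φstar : ℝ → ℝ)
    (heven : ∀ x, φ (-x) = φ x) (hconvex : ConvexOn ℝ Set.univ φ)
    (hφstar : ∀ y : ℝ, IsLUB {z : ℝ | ∃ x : ℝ, z = x * y - φ x} (φstar y))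
    (ξ : Ω → ℝ) (mbar a : ℝ) (ha : 0 < a)
    (hmgf : ∀ lam : ℝ, 0 < lam →
      E (fun ω => Real.exp (lam * (ξ ω - mbar))) ≤ Real.exp (φ (a * lam)))
    (eps : ℝ) (heps : 0 < eps) :
    V {ω | ξ ω - mbar > eps} ≤ Real.exp (-(φstar (eps / a))) := by
  have hφ : Continuous φ :=
    continuousOn_univ.mp (hconvex.continuousOn isOpen_univ)
  refine le_exp_neg_conjugate heven hφ (div_pos heps ha).le (hφstar _) fun x hx => ?_
  have hlam : 0 < x / a := div_pos hx ha
  calc V {ω | ξ ω - mbar > eps}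
      ≤ exp (-(x / a * eps)) * E (fun ω => exp (x / a * (ξ ω - mbar))) :=
        (hV _).trans_le (chernoff_bound E hmono hhomog _ hlam.le)
    _ ≤ exp (-(x / a * eps)) * exp (φ (a * (x / a))) :=
        mul_le_mul_of_nonneg_left (hmgf _ hlam) (exp_nonneg _)
    _ = exp (-(x * (eps / a) - φ x)) := by
        rw [← exp_add, mul_div_cancel₀ x ha.ne']
        ring_nf

theorem tail_bound_conjugate {Ω : Type*}
    (E : (Ω → ℝ) → ℝ)
    (hmono : ∀ X Y : Ω → ℝ, (∀ ω, X ω ≤ Y ω) → E X ≤ E Y)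
    (hconst : ∀ c : ℝ, E (fun _ => c) = c)
    (hsubadd : ∀ X Y : Ω → ℝ, E (fun ω => X ω + Y ω) ≤ E X + E Y)
    (hhomog : ∀ (l : ℝ), 0 ≤ l → ∀ X : Ω → ℝ, E (fun ω => l * X ω) = l * E X)
    (V : Set Ω → ℝ)
    (hV : ∀ A : Set Ω, V A = E (A.indicator fun _ => (1 : ℝ)))
    (φ φstar : ℝ → ℝ)
    (heven : ∀ x, φ (-x) = φ x) (hconvex : ConvexOn ℝ Set.univ φ)
    (hφstar : ∀ y : ℝ, IsLUB {z : ℝ | ∃ x : ℝ, z = x * y - φ x} (φstar y))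
    (ξ : Ω → ℝ) (mbar a : ℝ) (ha : 0 < a)
    (hmgf : ∀ lam : ℝ, 0 < lam →
      E (fun ω => Real.exp (lam * (ξ ω - mbar))) ≤ Real.exp (φ (a * lam)))
    (eps : ℝ) (heps : 0 < eps) :
    V {ω | ξ ω - mbar > eps} ≤ Real.exp (-(φstar (eps / a))) :=
  tail_bound_conjugate_general E hmono hhomog V hV φ φstar heven hconvex hφstar ξ mbar a ha hmgf eps
    heps
end

section
/- Zajkowski-type convergence theorem for sub-linear expectations: let p > 1 and let (Z_n) be a sequence of random variables such that for each n there exists a_n ≤ c n^{−α} (with fixed c, α > 0) with Ê[e^{λ(Z_n − m̄)}] ≤ e^{φ_p(a_n λ)} for all λ > 0 and Ê[e^{λ(Z_n − m̲)}] ≤ e^{φ_p(a_n λ)} for all λ < 0. Then V̂({liminf_n Z_n < m̲} ∪ {limsup_n Z_n > m̄}) = 0. -/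
/-!
Markov's inequality for `Ê`, applied to `exp (±λ (Z n - m))` with `λ = (n + 1) ^ (α / 2) / c`,
keeps `a n * λ ≤ 1`, where `φ_p ≤ 1 / 2`; so `V̂ (Z n ∉ (m̲ - ε, m̄ + ε)) ≤ 2 exp (1 / 2 - ε λ)`,
which is summable in `n`. Countable subadditivity of `V̂` gives a Borel–Cantelli lemma, and a
countable union over `ε = 1 / (j + 1)` covers the event in question.
-/

open Filter

open Set Real

theorem phiN_le_half (p : ℝ) {x : ℝ} (hx : |x| ≤ 1) : phiN p x ≤ 1 / 2 := by
  have : x ^ 2 ≤ 1 := by simpa using sq_le_one_iff_abs_le_one x |>.2 hx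
  rw [phiN, if_pos hx]
  linarith

theorem summable_exp_neg_mul_rpow_nat_add_one {d γ : ℝ} (hd : 0 < d) (hγ : 0 < γ) :
    Summable fun n : ℕ => exp (-d * ((n : ℝ) + 1) ^ γ) := by
  have hpow : (fun n : ℕ => ((n : ℝ) ^ γ) ^ (-2 / γ)) = fun n : ℕ => (n : ℝ) ^ (-2 : ℝ) := by
    ext n
    rw [← rpow_mul n.cast_nonneg, mul_div_cancel₀ _ hγ.ne']
  have hO := (isLittleO_exp_neg_mul_rpow_atTop hd (-2 / γ)).comp_tendsto
    ((tendsto_rpow_atTop hγ).comp tendsto_natCast_atTop_atTop)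
  have h : Summable fun n : ℕ => exp (-d * (n : ℝ) ^ γ) :=
    summable_of_isBigO_nat (Real.summable_nat_rpow.2 (by norm_num : (-2 : ℝ) < -1))
      (hpow ▸ hO.isBigO)
  simpa using (summable_nat_add_iff 1).2 h

theorem mul_rpow_half_div_le_one {a c α x : ℝ} (hc : 0 < c) (hα : 0 ≤ α) (hx : 1 ≤ x)
    (ha : a ≤ c * x ^ (-α)) : a * (x ^ (α / 2) / c) ≤ 1 := by
  have hx0 : 0 < x := one_pos.trans_le hx
  calc a * (x ^ (α / 2) / c) ≤ c * x ^ (-α) * (x ^ (α / 2) / c) := by gcongr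
    _ = x ^ (-α + α / 2) := by rw [rpow_add hx0]; field_simp
    _ ≤ 1 := rpow_le_one_of_one_le_of_nonpos hx (by linarith)

section SublinearExpectation

variable {Ω : Type*} {E : (Ω → ℝ) → ℝ}

theorem expectation_indicator_le_exp_sub
    (hmono : ∀ X Y : Ω → ℝ, (∀ ω, X ω ≤ Y ω) → E X ≤ E Y)
    (hhomog : ∀ (l : ℝ), 0 ≤ l → ∀ X : Ω → ℝ, E (fun ω => l * X ω) = l * E X)
    {A : Set Ω} {Y : Ω → ℝ} {t b : ℝ} (hA : ∀ ω ∈ A, t ≤ Y ω)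
    (hY : E (fun ω => exp (Y ω)) ≤ exp b) :
    E (A.indicator fun _ => 1) ≤ exp (b - t) := by
  have hind : ∀ ω, A.indicator (fun _ => (1 : ℝ)) ω ≤ exp (-t) * exp (Y ω) := by
    intro ω
    rw [← exp_add]
    by_cases hω : ω ∈ A
    · simpa [hω] using hA ω hω
    · simp [hω, (exp_pos _).le]
  calc E (A.indicator fun _ => 1) ≤ E (fun ω => exp (-t) * exp (Y ω)) := hmono _ _ hind
    _ = exp (-t) * E (fun ω => exp (Y ω)) := hhomog _ (exp_pos _).le _
    _ ≤ exp (-t) * exp b := by gcongr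
    _ = exp (b - t) := by rw [← exp_add, neg_add_eq_sub]

theorem expectation_indicator_union_le
    (hmono : ∀ X Y : Ω → ℝ, (∀ ω, X ω ≤ Y ω) → E X ≤ E Y)
    (hsubadd : ∀ X Y : Ω → ℝ, E (fun ω => X ω + Y ω) ≤ E X + E Y) (A B : Set Ω) :
    E ((A ∪ B).indicator fun _ => 1) ≤
      E (A.indicator fun _ => 1) + E (B.indicator fun _ => 1) := by
  have hind (ω : Ω) : (A ∪ B).indicator (fun _ => (1 : ℝ)) ω ≤
      A.indicator (fun _ => 1) ω + B.indicator (fun _ => 1) ω := by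
    rw [← indicator_union_add_inter_apply]
    exact le_add_of_nonneg_right (indicator_nonneg (fun _ _ => zero_le_one) ω)
  exact (hmono _ _ hind).trans (hsubadd _ _)

theorem expectation_indicator_notMem_Ioo_le
    (hmono : ∀ X Y : Ω → ℝ, (∀ ω, X ω ≤ Y ω) → E X ≤ E Y)
    (hsubadd : ∀ X Y : Ω → ℝ, E (fun ω => X ω + Y ω) ≤ E X + E Y)
    (hhomog : ∀ (l : ℝ), 0 ≤ l → ∀ X : Ω → ℝ, E (fun ω => l * X ω) = l * E X)
    (p : ℝ) {X : Ω → ℝ} {m M ε lam a : ℝ} (hlam : 0 < lam) (ha : 0 ≤ a) (hal : a * lam ≤ 1)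
    (hup : ∀ l : ℝ, 0 < l → E (fun ω => exp (l * (X ω - M))) ≤ exp (phiN p (a * l)))
    (hlow : ∀ l : ℝ, l < 0 → E (fun ω => exp (l * (X ω - m))) ≤ exp (phiN p (a * l))) :
    E ({ω | X ω ∉ Ioo (m - ε) (M + ε)}.indicator fun _ => 1) ≤ 2 * exp (1 / 2 - ε * lam) := by
  have hal' : |a * lam| ≤ 1 := by rwa [abs_of_nonneg (mul_nonneg ha hlam.le)]
  have hset : {ω | X ω ∉ Ioo (m - ε) (M + ε)} = {ω | X ω ≤ m - ε} ∪ {ω | M + ε ≤ X ω} := by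
    ext ω
    simp only [mem_ofPred_eq, mem_Ioo, mem_union, not_and_or, not_lt]
  have hlower : E ({ω | X ω ≤ m - ε}.indicator fun _ => 1) ≤ exp (1 / 2 - ε * lam) := by
    refine expectation_indicator_le_exp_sub hmono hhomog (fun ω (hω : X ω ≤ m - ε) => ?_)
      ((hlow (-lam) (neg_neg_of_pos hlam)).trans (exp_le_exp.2 (phiN_le_half p ?_)))
    · nlinarith
    · rwa [mul_neg, abs_neg]
  have hupper : E ({ω | M + ε ≤ X ω}.indicator fun _ => 1) ≤ exp (1 / 2 - ε * lam) := by
    refine expectation_indicator_le_exp_sub hmono hhomog (fun ω (hω : M + ε ≤ X ω) => ?_)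
      ((hup lam hlam).trans (exp_le_exp.2 (phiN_le_half p hal')))
    nlinarith
  rw [hset, two_mul]
  exact (expectation_indicator_union_le hmono hsubadd _ _).trans (add_le_add hlower hupper)

end SublinearExpectation

section Capacity

variable {Ω : Type*} {V : Set Ω → ℝ}

theorem capacity_iUnion_le_tsum (hV0 : ∀ A, 0 ≤ V A)
    (hVsigma : ∀ A : ℕ → Set Ω,
      ENNReal.ofReal (V (⋃ n, A n)) ≤ ∑' n, ENNReal.ofReal (V (A n)))
    {A : ℕ → Set Ω} {g : ℕ → ℝ} (hg : Summable g) (hle : ∀ n, V (A n) ≤ g n) :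
    V (⋃ n, A n) ≤ ∑' n, g n := by
  have hg0 : ∀ n, 0 ≤ g n := fun n => (hV0 _).trans (hle n)
  rw [← ENNReal.ofReal_le_ofReal_iff (tsum_nonneg hg0), ENNReal.ofReal_tsum_of_nonneg hg0 hg]
  exact (hVsigma A).trans (ENNReal.tsum_le_tsum fun n => ENNReal.ofReal_le_ofReal (hle n))

theorem capacity_setOf_frequently_eq_zero (hV0 : ∀ A, 0 ≤ V A)
    (hVmono : ∀ A B : Set Ω, A ⊆ B → V A ≤ V B)
    (hVsigma : ∀ A : ℕ → Set Ω,
      ENNReal.ofReal (V (⋃ n, A n)) ≤ ∑' n, ENNReal.ofReal (V (A n)))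
    {A : ℕ → Set Ω} {g : ℕ → ℝ} (hg : Summable g) (hle : ∀ n, V (A n) ≤ g n) :
    V {ω | ∃ᶠ n in atTop, ω ∈ A n} = 0 := by
  refine le_antisymm (ge_of_tendsto' (tendsto_sum_nat_add g) fun N => ?_) (hV0 _)
  calc V {ω | ∃ᶠ n in atTop, ω ∈ A n} ≤ V (⋃ n, A (n + N)) := hVmono _ _ fun ω hω => by
        obtain ⟨n, hn, hmem⟩ := frequently_atTop.1 hω N
        exact mem_iUnion.2 ⟨n - N, by rwa [Nat.sub_add_cancel hn]⟩
    _ ≤ ∑' n, g (n + N) :=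
        capacity_iUnion_le_tsum hV0 hVsigma ((summable_nat_add_iff N).2 hg) fun n => hle _

end Capacity

theorem exists_frequently_notMem_Ioo_of_liminf_lt_or_limsup_gt {u : ℕ → ℝ} {m M : ℝ}
    (h : liminf u atTop < m ∨ M < limsup u atTop) :
    ∃ j : ℕ, ∃ᶠ n in atTop, u n ∉ Ioo (m - 1 / ((j : ℝ) + 1)) (M + 1 / ((j : ℝ) + 1)) := by
  by_contra! hne
  have hcobdd_le : IsCoboundedUnder (· ≤ ·) atTop u :=
    isCoboundedUnder_le_of_eventually_le atTop ((hne 0).mono fun n hn => hn.1.le)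
  have hcobdd_ge : IsCoboundedUnder (· ≥ ·) atTop u :=
    isCoboundedUnder_ge_of_eventually_le atTop ((hne 0).mono fun n hn => hn.2.le)
  have hlim : m ≤ liminf u atTop ∧ limsup u atTop ≤ M := by
    constructor <;> refine le_of_forall_pos_le_add fun ε hε => ?_ <;>
      obtain ⟨j, hj⟩ := exists_nat_one_div_lt hε
    · have := le_liminf_of_le hcobdd_ge ((hne j).mono fun n hn => hn.1.le)
      linarith
    · have := limsup_le_of_le hcobdd_le ((hne j).mono fun n hn => hn.2.le)
      linarith
  rcases h with h | h <;> linarith [hlim.1, hlim.2]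

theorem zajkowski_sublinear_general {Ω : Type*}
    (E : (Ω → ℝ) → ℝ)
    (hmono : ∀ X Y : Ω → ℝ, (∀ ω, X ω ≤ Y ω) → E X ≤ E Y)
    (hsubadd : ∀ X Y : Ω → ℝ, E (fun ω => X ω + Y ω) ≤ E X + E Y)
    (hhomog : ∀ (l : ℝ), 0 ≤ l → ∀ X : Ω → ℝ, E (fun ω => l * X ω) = l * E X)
    (V : Set Ω → ℝ)
    (hV : ∀ A : Set Ω, V A = E (A.indicator fun _ => (1 : ℝ)))
    (hVempty : V ∅ = 0)
    (hVmono : ∀ A B : Set Ω, A ⊆ B → V A ≤ V B)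
    (hVsigma : ∀ A : ℕ → Set Ω,
      ENNReal.ofReal (V (⋃ n, A n)) ≤ ∑' n, ENNReal.ofReal (V (A n)))
    (p : ℝ) (c α : ℝ) (hc : 0 < c) (hα : 0 < α)
    (Z : ℕ → Ω → ℝ) (mbar munder : ℝ) (a : ℕ → ℝ)
    (ha0 : ∀ n, 0 ≤ a n)
    (ha : ∀ n : ℕ, a n ≤ c * ((n : ℝ) + 1) ^ (-α))
    (hup : ∀ n : ℕ, ∀ lam : ℝ, 0 < lam →
      E (fun ω => Real.exp (lam * (Z n ω - mbar))) ≤ Real.exp (phiN p (a n * lam)))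
    (hlow : ∀ n : ℕ, ∀ lam : ℝ, lam < 0 →
      E (fun ω => Real.exp (lam * (Z n ω - munder))) ≤ Real.exp (phiN p (a n * lam))) :
    V ({ω | liminf (fun n => Z n ω) atTop < munder} ∪
       {ω | limsup (fun n => Z n ω) atTop > mbar}) = 0 := by
  have hV0 : ∀ A, 0 ≤ V A := fun A => hVempty ▸ hVmono ∅ A (empty_subset A)
  have hfreq (j : ℕ) : V {ω | ∃ᶠ n in atTop,
      Z n ω ∉ Ioo (munder - 1 / ((j : ℝ) + 1)) (mbar + 1 / ((j : ℝ) + 1))} = 0 := by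
    have hε : 0 < 1 / ((j : ℝ) + 1) := by positivity
    have hsum : Summable fun n : ℕ =>
        2 * exp (1 / 2 - 1 / ((j : ℝ) + 1) * (((n : ℝ) + 1) ^ (α / 2) / c)) :=
      ((summable_exp_neg_mul_rpow_nat_add_one (div_pos hε hc) (half_pos hα)).mul_left
        (2 * exp (1 / 2))).congr fun n => by
          rw [mul_assoc, ← exp_add]
          ring_nf
    refine capacity_setOf_frequently_eq_zero hV0 hVmono hVsigma hsum fun n =>
      (hV _).trans_le <| expectation_indicator_notMem_Ioo_le hmono hsubadd hhomog p
        (by positivity) (ha0 n) (mul_rpow_half_div_le_one hc hα.le (by simp) (ha n))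
        (hup n) (hlow n)
  refine le_antisymm ?_ (hV0 _)
  calc _ ≤ V (⋃ j : ℕ, {ω | ∃ᶠ n in atTop,
        Z n ω ∉ Ioo (munder - 1 / ((j : ℝ) + 1)) (mbar + 1 / ((j : ℝ) + 1))}) :=
        hVmono _ _ fun ω hω => mem_iUnion.2
          (exists_frequently_notMem_Ioo_of_liminf_lt_or_limsup_gt hω)
    _ ≤ ∑' _ : ℕ, (0 : ℝ) :=
        capacity_iUnion_le_tsum hV0 hVsigma summable_zero fun j => (hfreq j).le
    _ = 0 := tsum_zero

theorem zajkowski_sublinear {Ω : Type*} [MeasurableSpace Ω]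
    (E : (Ω → ℝ) → ℝ)
    (hmono : ∀ X Y : Ω → ℝ, (∀ ω, X ω ≤ Y ω) → E X ≤ E Y)
    (hconst : ∀ c : ℝ, E (fun _ => c) = c)
    (hsubadd : ∀ X Y : Ω → ℝ, E (fun ω => X ω + Y ω) ≤ E X + E Y)
    (hhomog : ∀ (l : ℝ), 0 ≤ l → ∀ X : Ω → ℝ, E (fun ω => l * X ω) = l * E X)
    (V : Set Ω → ℝ)
    (hV : ∀ A : Set Ω, V A = E (A.indicator fun _ => (1 : ℝ)))
    (hVempty : V ∅ = 0) (hVuniv : V Set.univ = 1)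
    (hVmono : ∀ A B : Set Ω, A ⊆ B → V A ≤ V B)
    (hVsigma : ∀ A : ℕ → Set Ω,
      ENNReal.ofReal (V (⋃ n, A n)) ≤ ∑' n, ENNReal.ofReal (V (A n)))
    (hVcont : ∀ A : ℕ → Set Ω, Monotone A →
      Tendsto (fun n => V (A n)) atTop (nhds (V (⋃ n, A n))))
    (p : ℝ) (hp : 1 < p) (c α : ℝ) (hc : 0 < c) (hα : 0 < α)
    (Z : ℕ → Ω → ℝ) (mbar munder : ℝ) (a : ℕ → ℝ)
    (ha0 : ∀ n, 0 ≤ a n)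
    (ha : ∀ n : ℕ, a n ≤ c * ((n : ℝ) + 1) ^ (-α))
    (hup : ∀ n : ℕ, ∀ lam : ℝ, 0 < lam →
      E (fun ω => Real.exp (lam * (Z n ω - mbar))) ≤ Real.exp (phiN p (a n * lam)))
    (hlow : ∀ n : ℕ, ∀ lam : ℝ, lam < 0 →
      E (fun ω => Real.exp (lam * (Z n ω - munder))) ≤ Real.exp (phiN p (a n * lam))) :
    V ({ω | liminf (fun n => Z n ω) atTop < munder} ∪
       {ω | limsup (fun n => Z n ω) atTop > mbar}) = 0 :=
  zajkowski_sublinear_general E hmono hsubadd hhomog V hV hVempty hVmono hVsigma p c α hc hα Z mbar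
    munder a ha0 ha hup hlow
end

section
/- Strong law of large numbers for sub-Gaussian sequences under sub-linear expectation: let ξ_1, ξ_2, … satisfy Ê[∏_{i=1}^k e^{λ(ξ_i − m)}] ≤ ∏_{i=1}^k Ê[e^{λ(ξ_i − m)}] for all real λ, m, k, and suppose there exist σ > 0, m̄, m̲ with Ê[e^{λ(ξ_i − m̄)}] ≤ e^{σ²λ²/2} for all λ > 0 and Ê[e^{λ(ξ_i − m̲)}] ≤ e^{σ²λ²/2} for all λ < 0. Then with S_n = ξ_1 + ⋯ + ξ_n, V̂({liminf S_n/n < m̲} ∪ {limsup S_n/n > m̄}) = 0. -/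
/-!
The exponential Chebyshev inequality together with the product bound `hfact` gives the Chernoff
estimate `V̂(S_n/n ≥ m̄ + δ) ≤ e^{-cn}` with `c > 0`, and likewise for the lower tail. These bounds
are summable, so by the Borel–Cantelli lemma for the countably subadditive capacity `V̂`,
`S_n/n` leaves `(m̲ - δ, m̄ + δ)` infinitely often only on a `V̂`-null set. A countable union
over `δ = 1/(j+1)` finishes the proof.
-/

open Filter Finset Real Set

noncomputable def runningMean {Ω : Type*} (ξ : ℕ → Ω → ℝ) (n : ℕ) (ω : Ω) : ℝ :=
  (∑ i ∈ range (n + 1), ξ i ω) / ((n : ℝ) + 1)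

theorem sum_sub_eq_mul_runningMean_sub {Ω : Type*} (ξ : ℕ → Ω → ℝ) (m : ℝ) (n : ℕ) (ω : Ω) :
    ∑ i ∈ range (n + 1), (ξ i ω - m) = ((n : ℝ) + 1) * (runningMean ξ n ω - m) := by
  rw [sum_sub_distrib, sum_const, card_range, runningMean, mul_sub,
    mul_div_cancel₀ _ (by positivity)]
  ring

theorem le_liminf_and_limsup_le_of_eventually {α : Type*} {l : Filter α} [l.NeBot] {u : α → ℝ}
    {a b : ℝ} (ha : ∀ j : ℕ, ∀ᶠ x in l, a - 1 / ((j : ℝ) + 1) ≤ u x)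
    (hb : ∀ j : ℕ, ∀ᶠ x in l, u x ≤ b + 1 / ((j : ℝ) + 1)) :
    a ≤ liminf u l ∧ limsup u l ≤ b := by
  have hcobdd_le : IsCoboundedUnder (· ≤ ·) l u := isCoboundedUnder_le_of_eventually_le l (ha 0)
  have hcobdd_ge : IsCoboundedUnder (· ≥ ·) l u := isCoboundedUnder_ge_of_eventually_le l (hb 0)
  constructor
  · refine le_of_forall_pos_le_add fun ε hε => ?_
    obtain ⟨j, hj⟩ := exists_nat_one_div_lt hε
    linarith [le_liminf_of_le hcobdd_ge (ha j)]
  · refine le_of_forall_pos_le_add fun ε hε => ?_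
    obtain ⟨j, hj⟩ := exists_nat_one_div_lt hε
    linarith [limsup_le_of_le hcobdd_le (hb j)]

section Capacity

variable {Ω : Type*}

structure IsMonotonePosHomogeneous (E : (Ω → ℝ) → ℝ) : Prop where
  mono : ∀ X Y : Ω → ℝ, (∀ ω, X ω ≤ Y ω) → E X ≤ E Y
  homog : ∀ l : ℝ, 0 ≤ l → ∀ X : Ω → ℝ, E (fun ω => l * X ω) = l * E X

noncomputable def capacity (E : (Ω → ℝ) → ℝ) (A : Set Ω) : ℝ :=
  E (A.indicator fun _ => 1)

variable {E : (Ω → ℝ) → ℝ} {ξ : ℕ → Ω → ℝ}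

namespace IsMonotonePosHomogeneous

theorem nonneg (hE : IsMonotonePosHomogeneous E) {X : Ω → ℝ} (hX : ∀ ω, 0 ≤ X ω) :
    0 ≤ E X := by
  have hzero : E (fun _ => 0) = 0 := by simpa using hE.homog 0 le_rfl fun _ => 0
  simpa [hzero] using hE.mono _ X hX

theorem capacity_nonneg (hE : IsMonotonePosHomogeneous E) (A : Set Ω) : 0 ≤ capacity E A :=
  hE.nonneg (indicator_nonneg fun _ _ => zero_le_one)

theorem capacity_mono (hE : IsMonotonePosHomogeneous E) {A B : Set Ω} (hAB : A ⊆ B) :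
    capacity E A ≤ capacity E B :=
  hE.mono _ _ (indicator_le_indicator_of_subset hAB fun _ => zero_le_one)

theorem capacity_eq_zero_of_subset (hE : IsMonotonePosHomogeneous E) {A B : Set Ω}
    (hAB : A ⊆ B) (hB : capacity E B = 0) : capacity E A = 0 :=
  le_antisymm (hB ▸ hE.capacity_mono hAB) (hE.capacity_nonneg A)

theorem capacity_eq_zero_of_subset_iUnion (hE : IsMonotonePosHomogeneous E)
    (hVsigma : ∀ A : ℕ → Set Ω,
      ENNReal.ofReal (capacity E (⋃ n, A n)) ≤ ∑' n, ENNReal.ofReal (capacity E (A n)))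
    {A : Set Ω} {B : ℕ → Set Ω} (hAB : A ⊆ ⋃ n, B n) (hB : ∀ n, capacity E (B n) = 0) :
    capacity E A = 0 := by
  have h : ENNReal.ofReal (capacity E (⋃ n, B n)) = 0 := by simpa [hB] using hVsigma B
  exact hE.capacity_eq_zero_of_subset hAB
    (le_antisymm (ENNReal.ofReal_eq_zero.mp h) (hE.capacity_nonneg _))

theorem capacity_union_eq_zero (hE : IsMonotonePosHomogeneous E)
    (hVsigma : ∀ A : ℕ → Set Ω,
      ENNReal.ofReal (capacity E (⋃ n, A n)) ≤ ∑' n, ENNReal.ofReal (capacity E (A n)))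
    {A B : Set Ω} (hA : capacity E A = 0) (hB : capacity E B = 0) : capacity E (A ∪ B) = 0 := by
  refine hE.capacity_eq_zero_of_subset_iUnion hVsigma (B := fun n => if n = 0 then A else B)
    ?_ fun n => by split_ifs <;> assumption
  rintro ω (h | h)
  · exact mem_iUnion.2 ⟨0, by simpa using h⟩
  · exact mem_iUnion.2 ⟨1, by simpa using h⟩

theorem capacity_frequently_eq_zero (hE : IsMonotonePosHomogeneous E)
    (hVsigma : ∀ A : ℕ → Set Ω,
      ENNReal.ofReal (capacity E (⋃ n, A n)) ≤ ∑' n, ENNReal.ofReal (capacity E (A n)))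
    {A : ℕ → Set Ω} (hA : Summable fun n => capacity E (A n)) :
    capacity E {ω | ∃ᶠ n in atTop, ω ∈ A n} = 0 := by
  have hfin : ∑' n, ENNReal.ofReal (capacity E (A n)) ≠ ⊤ := by
    rw [← ENNReal.ofReal_tsum_of_nonneg (fun n => hE.capacity_nonneg (A n)) hA]
    exact ENNReal.ofReal_ne_top
  have htail : ∀ N, ENNReal.ofReal (capacity E {ω | ∃ᶠ n in atTop, ω ∈ A n}) ≤
      ∑' k, ENNReal.ofReal (capacity E (A (k + N))) := fun N => by
    refine le_trans (ENNReal.ofReal_le_ofReal (hE.capacity_mono fun ω hω => ?_))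
      (hVsigma fun k => A (k + N))
    obtain ⟨n, hn, hωn⟩ := frequently_atTop.mp hω N
    exact mem_iUnion.2 ⟨n - N, by rwa [Nat.sub_add_cancel hn]⟩
  have hzero := ge_of_tendsto' (ENNReal.tendsto_sum_nat_add _ hfin) htail
  exact le_antisymm (ENNReal.ofReal_eq_zero.mp (nonpos_iff_eq_zero.mp hzero))
    (hE.capacity_nonneg _)

theorem capacity_ge_le_exp_mul_exp (hE : IsMonotonePosHomogeneous E) (f : Ω → ℝ) (t : ℝ) :
    capacity E {ω | t ≤ f ω} ≤ exp (-t) * E (fun ω => exp (f ω)) := by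
  rw [capacity, ← hE.homog _ (exp_nonneg _)]
  refine hE.mono _ _ fun ω => ?_
  by_cases h : t ≤ f ω
  · rw [indicator_of_mem (show ω ∈ {ω | t ≤ f ω} from h), ← exp_add]
    exact one_le_exp (by linarith)
  · rw [indicator_of_notMem (show ω ∉ {ω | t ≤ f ω} from h)]
    positivity

theorem capacity_mul_sum_sub_ge_le_exp (hE : IsMonotonePosHomogeneous E) {lam m s t : ℝ} {k : ℕ}
    (hfact : E (fun ω => ∏ i ∈ range k, exp (lam * (ξ i ω - m))) ≤
      ∏ i ∈ range k, E (fun ω => exp (lam * (ξ i ω - m))))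
    (hmgf : ∀ i ∈ range k, E (fun ω => exp (lam * (ξ i ω - m))) ≤ exp s) :
    capacity E {ω | t ≤ lam * ∑ i ∈ range k, (ξ i ω - m)} ≤ exp (k * s - t) := by
  have hexp : ∀ ω, exp (lam * ∑ i ∈ range k, (ξ i ω - m)) =
      ∏ i ∈ range k, exp (lam * (ξ i ω - m)) := fun ω => by rw [mul_sum, exp_sum]
  calc capacity E {ω | t ≤ lam * ∑ i ∈ range k, (ξ i ω - m)}
      ≤ exp (-t) * E (fun ω => exp (lam * ∑ i ∈ range k, (ξ i ω - m))) :=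
        hE.capacity_ge_le_exp_mul_exp _ t
    _ ≤ exp (-t) * ∏ i ∈ range k, E (fun ω => exp (lam * (ξ i ω - m))) := by
        simp only [hexp]
        gcongr
    _ ≤ exp (-t) * ∏ _i ∈ range k, exp s := by
        gcongr exp (-t) * ?_
        exact prod_le_prod (fun i _ => hE.nonneg fun ω => exp_nonneg _) hmgf
    _ = exp (k * s - t) := by
        rw [prod_const, card_range, ← exp_nat_mul, ← exp_add]
        ring_nf

theorem capacity_mul_runningMean_sub_ge_le_exp_pow (hE : IsMonotonePosHomogeneous E)
    {lam m s c : ℝ}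
    (hfact : ∀ k : ℕ, E (fun ω => ∏ i ∈ range k, exp (lam * (ξ i ω - m))) ≤
      ∏ i ∈ range k, E (fun ω => exp (lam * (ξ i ω - m))))
    (hmgf : ∀ i, E (fun ω => exp (lam * (ξ i ω - m))) ≤ exp s) (n : ℕ) :
    capacity E {ω | c ≤ lam * (runningMean ξ n ω - m)} ≤ exp (s - c) ^ (n + 1) := by
  have hset : {ω | c ≤ lam * (runningMean ξ n ω - m)} =
      {ω | ((n : ℝ) + 1) * c ≤ lam * ∑ i ∈ range (n + 1), (ξ i ω - m)} := by
    ext ω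
    change c ≤ _ ↔ ((n : ℝ) + 1) * c ≤ _
    rw [sum_sub_eq_mul_runningMean_sub, mul_left_comm, mul_le_mul_iff_right₀ (by positivity)]
  rw [hset, ← exp_nat_mul]
  convert hE.capacity_mul_sum_sub_ge_le_exp (hfact (n + 1)) fun i _ => hmgf i using 2
  push_cast
  ring

theorem capacity_frequently_mul_runningMean_sub_ge_eq_zero (hE : IsMonotonePosHomogeneous E)
    (hVsigma : ∀ A : ℕ → Set Ω,
      ENNReal.ofReal (capacity E (⋃ n, A n)) ≤ ∑' n, ENNReal.ofReal (capacity E (A n)))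
    {lam m s c : ℝ}
    (hfact : ∀ k : ℕ, E (fun ω => ∏ i ∈ range k, exp (lam * (ξ i ω - m))) ≤
      ∏ i ∈ range k, E (fun ω => exp (lam * (ξ i ω - m))))
    (hmgf : ∀ i, E (fun ω => exp (lam * (ξ i ω - m))) ≤ exp s) (hsc : s < c) :
    capacity E {ω | ∃ᶠ n in atTop, c ≤ lam * (runningMean ξ n ω - m)} = 0 := by
  refine hE.capacity_frequently_eq_zero hVsigma
    (A := fun n => {ω | c ≤ lam * (runningMean ξ n ω - m)}) ?_
  have hgeom : Summable fun n : ℕ => exp (s - c) ^ (n + 1) :=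
    (summable_nat_add_iff 1).mpr
      (summable_geometric_of_lt_one (exp_nonneg _) (exp_lt_one_iff.mpr (by linarith)))
  exact hgeom.of_nonneg_of_le (fun n => hE.capacity_nonneg _)
    (hE.capacity_mul_runningMean_sub_ge_le_exp_pow hfact hmgf)

theorem capacity_frequently_runningMean_deviates_eq_zero (hE : IsMonotonePosHomogeneous E)
    (hVsigma : ∀ A : ℕ → Set Ω,
      ENNReal.ofReal (capacity E (⋃ n, A n)) ≤ ∑' n, ENNReal.ofReal (capacity E (A n)))
    {σ mbar munder δ : ℝ}
    (hfact : ∀ (lam m : ℝ) (k : ℕ), E (fun ω => ∏ i ∈ range k, exp (lam * (ξ i ω - m))) ≤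
      ∏ i ∈ range k, E (fun ω => exp (lam * (ξ i ω - m))))
    (hup : ∀ i : ℕ, ∀ lam : ℝ, 0 < lam →
      E (fun ω => exp (lam * (ξ i ω - mbar))) ≤ exp (σ ^ 2 * lam ^ 2 / 2))
    (hlow : ∀ i : ℕ, ∀ lam : ℝ, lam < 0 →
      E (fun ω => exp (lam * (ξ i ω - munder))) ≤ exp (σ ^ 2 * lam ^ 2 / 2))
    (hδ : 0 < δ) :
    capacity E ({ω | ∃ᶠ n in atTop, runningMean ξ n ω ≤ munder - δ} ∪
      {ω | ∃ᶠ n in atTop, mbar + δ ≤ runningMean ξ n ω}) = 0 := by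
  -- Any `μ ∈ (0, 2δ/σ²)` makes the Chernoff exponent `σ²μ²/2 - δμ` negative.
  set μ := δ / (σ ^ 2 + 1)
  have hμ : 0 < μ := by positivity
  have hexponent : σ ^ 2 * μ ^ 2 / 2 < δ * μ := by
    have : μ * (σ ^ 2 + 1) = δ := div_mul_cancel₀ _ (by positivity)
    nlinarith [sq_nonneg σ]
  refine hE.capacity_union_eq_zero hVsigma ?_ ?_
  · refine hE.capacity_eq_zero_of_subset (fun ω hω => hω.mono fun n hn => ?_)
      (hE.capacity_frequently_mul_runningMean_sub_ge_eq_zero hVsigma (hfact (-μ) munder)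
        (fun i => by simpa only [neg_sq] using hlow i (-μ) (by linarith)) hexponent)
    nlinarith
  · refine hE.capacity_eq_zero_of_subset (fun ω hω => hω.mono fun n hn => ?_)
      (hE.capacity_frequently_mul_runningMean_sub_ge_eq_zero hVsigma (hfact μ mbar)
        (fun i => hup i μ hμ) hexponent)
    nlinarith

end IsMonotonePosHomogeneous

end Capacity

theorem slln_subgaussian_sublinear_general {Ω : Type*}
    (E : (Ω → ℝ) → ℝ)
    (hmono : ∀ X Y : Ω → ℝ, (∀ ω, X ω ≤ Y ω) → E X ≤ E Y)
    (hhomog : ∀ (l : ℝ), 0 ≤ l → ∀ X : Ω → ℝ, E (fun ω => l * X ω) = l * E X)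
    (V : Set Ω → ℝ)
    (hV : ∀ A : Set Ω, V A = E (A.indicator fun _ => (1 : ℝ)))
    (hVsigma : ∀ A : ℕ → Set Ω,
      ENNReal.ofReal (V (⋃ n, A n)) ≤ ∑' n, ENNReal.ofReal (V (A n)))
    (ξ : ℕ → Ω → ℝ)
    (hfact : ∀ (lam m : ℝ) (k : ℕ),
      E (fun ω => ∏ i ∈ Finset.range k, Real.exp (lam * (ξ i ω - m))) ≤
        ∏ i ∈ Finset.range k, E (fun ω => Real.exp (lam * (ξ i ω - m))))
    (σ mbar munder : ℝ)
    (hup : ∀ i : ℕ, ∀ lam : ℝ, 0 < lam →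
      E (fun ω => Real.exp (lam * (ξ i ω - mbar))) ≤ Real.exp (σ ^ 2 * lam ^ 2 / 2))
    (hlow : ∀ i : ℕ, ∀ lam : ℝ, lam < 0 →
      E (fun ω => Real.exp (lam * (ξ i ω - munder))) ≤ Real.exp (σ ^ 2 * lam ^ 2 / 2)) :
    V ({ω | liminf (fun n : ℕ =>
            (∑ i ∈ Finset.range (n + 1), ξ i ω) / ((n : ℝ) + 1)) atTop < munder} ∪
       {ω | limsup (fun n : ℕ =>
            (∑ i ∈ Finset.range (n + 1), ξ i ω) / ((n : ℝ) + 1)) atTop > mbar}) = 0 := by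
  obtain rfl : V = capacity E := funext hV
  have hE : IsMonotonePosHomogeneous E := ⟨hmono, hhomog⟩
  refine hE.capacity_eq_zero_of_subset_iUnion hVsigma
    (B := fun j : ℕ => {ω | ∃ᶠ n in atTop, runningMean ξ n ω ≤ munder - 1 / ((j : ℝ) + 1)} ∪
      {ω | ∃ᶠ n in atTop, mbar + 1 / ((j : ℝ) + 1) ≤ runningMean ξ n ω})
    (fun ω hω => ?_) fun j => hE.capacity_frequently_runningMean_deviates_eq_zero hVsigma
      hfact hup hlow Nat.one_div_pos_of_nat
  by_contra hgood
  simp only [mem_iUnion, mem_union, mem_ofPred_eq, not_exists, not_or, not_frequently,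
    not_le] at hgood
  obtain ⟨hliminf, hlimsup⟩ := le_liminf_and_limsup_le_of_eventually
    (u := fun n => runningMean ξ n ω)
    (fun j => (hgood j).1.mono fun _ h => h.le) (fun j => (hgood j).2.mono fun _ h => h.le)
  rcases hω with hω | hω
  · exact (not_lt.mpr hliminf) hω
  · exact (not_lt.mpr hlimsup) hω

theorem slln_subgaussian_sublinear {Ω : Type*} [MeasurableSpace Ω]
    (E : (Ω → ℝ) → ℝ)
    (hmono : ∀ X Y : Ω → ℝ, (∀ ω, X ω ≤ Y ω) → E X ≤ E Y)
    (hconst : ∀ c : ℝ, E (fun _ => c) = c)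
    (hsubadd : ∀ X Y : Ω → ℝ, E (fun ω => X ω + Y ω) ≤ E X + E Y)
    (hhomog : ∀ (l : ℝ), 0 ≤ l → ∀ X : Ω → ℝ, E (fun ω => l * X ω) = l * E X)
    (hmonoconv : ∀ X : ℕ → Ω → ℝ, (∀ ω, 0 ≤ X 0 ω) →
      (∀ ω, Monotone fun n => X n ω) → ∀ Xlim : Ω → ℝ,
      (∀ ω, Tendsto (fun n => X n ω) atTop (nhds (Xlim ω))) →
      Tendsto (fun n => E (X n)) atTop (nhds (E Xlim)))
    (V : Set Ω → ℝ)
    (hV : ∀ A : Set Ω, V A = E (A.indicator fun _ => (1 : ℝ)))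
    (hVsigma : ∀ A : ℕ → Set Ω,
      ENNReal.ofReal (V (⋃ n, A n)) ≤ ∑' n, ENNReal.ofReal (V (A n)))
    (hVcont : ∀ A : ℕ → Set Ω, Monotone A →
      Tendsto (fun n => V (A n)) atTop (nhds (V (⋃ n, A n))))
    (ξ : ℕ → Ω → ℝ)
    (hfact : ∀ (lam m : ℝ) (k : ℕ),
      E (fun ω => ∏ i ∈ Finset.range k, Real.exp (lam * (ξ i ω - m))) ≤
        ∏ i ∈ Finset.range k, E (fun ω => Real.exp (lam * (ξ i ω - m))))
    (σ mbar munder : ℝ) (hσ : 0 < σ)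
    (hup : ∀ i : ℕ, ∀ lam : ℝ, 0 < lam →
      E (fun ω => Real.exp (lam * (ξ i ω - mbar))) ≤ Real.exp (σ ^ 2 * lam ^ 2 / 2))
    (hlow : ∀ i : ℕ, ∀ lam : ℝ, lam < 0 →
      E (fun ω => Real.exp (lam * (ξ i ω - munder))) ≤ Real.exp (σ ^ 2 * lam ^ 2 / 2)) :
    V ({ω | liminf (fun n : ℕ =>
            (∑ i ∈ Finset.range (n + 1), ξ i ω) / ((n : ℝ) + 1)) atTop < munder} ∪
       {ω | limsup (fun n : ℕ =>
            (∑ i ∈ Finset.range (n + 1), ξ i ω) / ((n : ℝ) + 1)) atTop > mbar}) = 0 :=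
  slln_subgaussian_sublinear_general E hmono hhomog V hV hVsigma ξ hfact σ mbar munder hup hlow
end
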